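/- Let N ≥ 2, let θ : {1,…,N} → [−π,π) be a configuration on the ring, let η ∈ ℝ^{N+1} be a lift of θ, and fix k ∈ {1,…,N}. Let θ' be obtained from θ by a midpoint update at edge (k,k+1) (assume δ(k) ≠ −π, so the update is deterministic). Then there exists a unique lift η' of θ' satisfying η'(k) = η'(k+1) = (η(k) + η(k+1))/2 (with the index k+1 read as N+1 when k = N), and η'(i+1) − η'(i) = δ'(i) for all i, where δ' are the wrapped increments of θ'. -/

import Mathlib

open Real

/-- The wrap operator `wrap_π(a) = a - 2π⌊(a+π)/(2π)⌋`, taking values in `[-π, π)`. -/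
noncomputable def wrapPi (a : ℝ) : ℝ := a - 2 * π * ⌊(a + π) / (2 * π)⌋

/-!
A midpoint update moves `θ(k)` and `θ(k+1)` to the same point of the circle, so the new wrapped
increment `δ'(k)` vanishes. A sequence is determined by one value and its increments, so `η'` must be
the sequence with increments `δ'` and value `(η(k) + η(k+1))/2 = η(k) + δ(k)/2` at `k`; this value is
congruent to `θ'(k)` modulo `2π`. Since the increments of a lift are wrapped differences, congruence
modulo `2π` with the configuration propagates from one index to all of `1, …, N+1`, and at index `1`
it pins down the anchor.
-/

open Set

lemma wrapPi_eq_toIcoMod (a : ℝ) : wrapPi a = toIcoMod two_pi_pos (-π) a := by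
  rw [toIcoMod, toIcoDiv_eq_floor, wrapPi, sub_neg_eq_add, zsmul_eq_mul, mul_comm]

lemma wrapPi_mem_Ico (a : ℝ) : wrapPi a ∈ Ico (-π) π := by
  simpa [wrapPi_eq_toIcoMod, show -π + 2 * π = π by ring] using
    toIcoMod_mem_Ico two_pi_pos (-π) a

lemma coe_wrapPi (a : ℝ) : ((wrapPi a : ℝ) : Angle) = a :=
  Angle.angle_eq_iff_two_pi_dvd_sub.2 ⟨-⌊(a + π) / (2 * π)⌋, by rw [wrapPi]; push_cast; ring⟩

lemma wrapPi_eq_iff {a b : ℝ} : wrapPi a = b ↔ b ∈ Ico (-π) π ∧ (a : Angle) = b := by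
  refine ⟨fun h => h ▸ ⟨wrapPi_mem_Ico a, (coe_wrapPi a).symm⟩, fun ⟨hb, hab⟩ => ?_⟩
  obtain ⟨z, hz⟩ := Angle.angle_eq_iff_two_pi_dvd_sub.1 hab
  rw [wrapPi_eq_toIcoMod, toIcoMod_eq_iff, show -π + 2 * π = π by ring]
  exact ⟨hb, z, by rw [zsmul_eq_mul]; linarith⟩

lemma wrapPi_eq_zero_iff {a : ℝ} : wrapPi a = 0 ↔ (a : Angle) = 0 := by
  simp [wrapPi_eq_iff, pi_pos, pi_pos.le]

lemma wrapPi_sub_midpoint_update (x y : ℝ) :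
    wrapPi (wrapPi (y - wrapPi (y - x) / 2) - wrapPi (x + wrapPi (y - x) / 2)) = 0 := by
  rw [wrapPi_eq_zero_iff, Angle.coe_sub, coe_wrapPi, coe_wrapPi, ← Angle.coe_sub,
    show y - wrapPi (y - x) / 2 - (x + wrapPi (y - x) / 2) = (y - x) - wrapPi (y - x) by ring,
    Angle.coe_sub, coe_wrapPi, sub_self]

lemma iff_of_forall_iff_succ {P : ℕ → Prop} {a b : ℕ}
    (h : ∀ i, a ≤ i → i < b → (P i ↔ P (i + 1))) {i j : ℕ} (hai : a ≤ i) (hij : i ≤ j)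
    (hjb : j ≤ b) : P i ↔ P j := by
  induction j, hij using Nat.le_induction with
  | base => rfl
  | succ j hij ih => exact (ih (by omega)).trans (h j (by omega) (by omega))

lemma eq_on_Icc_of_eq_of_sub_eq {G : Type*} [AddGroup G] {f g : ℕ → G} {a b k : ℕ}
    (hk : k ∈ Icc a b) (hfg : f k = g k)
    (hd : ∀ i, a ≤ i → i < b → f (i + 1) - f i = g (i + 1) - g i) :
    ∀ i ∈ Icc a b, f i = g i := by
  have hstep : ∀ i, a ≤ i → i < b → (f i = g i ↔ f (i + 1) = g (i + 1)) := by
    intro i hai hib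
    have hdi := hd i hai hib
    constructor
    · intro h
      rw [h] at hdi
      exact sub_left_inj.1 hdi
    · intro h
      rw [h] at hdi
      exact sub_right_inj.1 hdi
  intro i hi
  rcases le_total i k with hik | hki
  · exact (iff_of_forall_iff_succ hstep hi.1 hik hk.2).2 hfg
  · exact (iff_of_forall_iff_succ hstep hk.1 hki hi.2).1 hfg

lemma exists_seq_eq_and_sub_eq {G : Type*} [AddCommGroup G] (d : ℕ → G) (k : ℕ) (c : G) :
    ∃ f : ℕ → G, f k = c ∧ ∀ i, f (i + 1) - f i = d i :=
  ⟨fun i => c + (∑ j ∈ Finset.range i, d j - ∑ j ∈ Finset.range k, d j), by simp,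
    fun i => by simp only [Finset.sum_range_succ]; abel⟩

lemma coe_eq_coe_of_sub_eq_wrapPi {N : ℕ} {θ : ZMod N → ℝ} {η : ℕ → ℝ}
    (hinc : ∀ i : ℕ, 1 ≤ i → i ≤ N →
      η (i + 1) - η i = wrapPi (θ ((i : ZMod N) + 1) - θ (i : ZMod N)))
    {k : ℕ} (hk : k ∈ Icc 1 (N + 1)) (hηk : (η k : Angle) = θ k) :
    ∀ i ∈ Icc 1 (N + 1), (η i : Angle) = θ i :=
  eq_on_Icc_of_eq_of_sub_eq (f := fun i => (η i : Angle)) (g := fun i => (θ i : Angle)) hk hηk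
    fun i h1 h2 => by
      rw [← Angle.coe_sub, hinc i h1 (by omega), coe_wrapPi, Angle.coe_sub, Nat.cast_succ]

theorem lift_of_midpoint_update_exists_unique_general
    (N : ℕ)
    (θ : ZMod N → ℝ)
    (η : ℕ → ℝ)
    (hinc : ∀ i : ℕ, 1 ≤ i → i ≤ N →
      η (i + 1) - η i = wrapPi (θ ((i : ZMod N) + 1) - θ (i : ZMod N)))
    (hanchor : wrapPi (η 1) = θ 1)
    (k : ℕ) (hk1 : 1 ≤ k) (hkN : k ≤ N)
    (θ' : ZMod N → ℝ)
    (hθ' : θ' = fun i =>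
      if i = (k : ZMod N) then
        wrapPi (θ (k : ZMod N) + wrapPi (θ ((k : ZMod N) + 1) - θ (k : ZMod N)) / 2)
      else if i = (k : ZMod N) + 1 then
        wrapPi (θ ((k : ZMod N) + 1) - wrapPi (θ ((k : ZMod N) + 1) - θ (k : ZMod N)) / 2)
      else θ i) :
    ∃ η' : ℕ → ℝ,
      (η' k = (η k + η (k + 1)) / 2 ∧
       η' (k + 1) = (η k + η (k + 1)) / 2 ∧
       (∀ i : ℕ, 1 ≤ i → i ≤ N →
         η' (i + 1) - η' i = wrapPi (θ' ((i : ZMod N) + 1) - θ' (i : ZMod N))) ∧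
       wrapPi (η' 1) = θ' 1) ∧
      (∀ η'' : ℕ → ℝ,
        (η'' k = (η k + η (k + 1)) / 2 ∧
         η'' (k + 1) = (η k + η (k + 1)) / 2 ∧
         (∀ i : ℕ, 1 ≤ i → i ≤ N →
           η'' (i + 1) - η'' i = wrapPi (θ' ((i : ZMod N) + 1) - θ' (i : ZMod N))) ∧
         wrapPi (η'' 1) = θ' 1) →
        ∀ i : ℕ, 1 ≤ i → i ≤ N + 1 → η'' i = η' i) := by
  set K : ZMod N := (k : ZMod N)
  set δ := wrapPi (θ (K + 1) - θ K)
  have hk : k ∈ Icc 1 (N + 1) := ⟨hk1, by omega⟩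
  obtain ⟨η', hη'k, hη'inc⟩ := exists_seq_eq_and_sub_eq
    (fun i : ℕ => wrapPi (θ' ((i : ZMod N) + 1) - θ' (i : ZMod N))) k ((η k + η (k + 1)) / 2)
  have hθ'K : θ' K = wrapPi (θ K + δ / 2) := by simp [hθ']
  have hδ'k : wrapPi (θ' (K + 1) - θ' K) = 0 := by
    by_cases hK : K + 1 = K
    · rw [hK, sub_self, wrapPi_eq_zero_iff, Angle.coe_zero]
    · rw [show θ' (K + 1) = wrapPi (θ (K + 1) - δ / 2) by simp [hθ', hK], hθ'K]
      exact wrapPi_sub_midpoint_update _ _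
  have hηθ := coe_eq_coe_of_sub_eq_wrapPi hinc (k := 1) ⟨le_rfl, by omega⟩
    (by rw [Nat.cast_one, ← hanchor, coe_wrapPi])
  have hη'θ' := coe_eq_coe_of_sub_eq_wrapPi (fun i _ _ => hη'inc i) hk <| by
    rw [hη'k, show (η k + η (k + 1)) / 2 = η k + δ / 2 by linarith [hinc k hk1 hkN], hθ'K,
      coe_wrapPi, Angle.coe_add, Angle.coe_add, hηθ k hk]
  have hθ'1 : θ' 1 ∈ Ico (-π) π := by
    rw [hθ']
    dsimp only
    split_ifs
    exacts [wrapPi_mem_Ico _, wrapPi_mem_Ico _, hanchor ▸ wrapPi_mem_Ico _]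
  refine ⟨η', ⟨hη'k, by linarith [hη'inc k], fun i _ _ => hη'inc i,
    wrapPi_eq_iff.2 ⟨hθ'1, by simpa using hη'θ' 1 ⟨le_rfl, by omega⟩⟩⟩, ?_⟩
  rintro η'' ⟨hη''k, -, hη''inc, -⟩ i hi1 hi2
  exact eq_on_Icc_of_eq_of_sub_eq hk (hη''k.trans hη'k.symm)
    (fun j h1 h2 => by rw [hη''inc j h1 (by omega), hη'inc]) i ⟨hi1, hi2⟩

/-- Existence and uniqueness of the lift of a configuration obtained by a
midpoint update.  If `η` is a lift of `θ` and `θ'` is obtained from `θ` by a midpoint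
update at edge `(k,k+1)` (with `δ(k) ≠ -π`), then there is a unique lift `η'` of `θ'`
with `η'(k) = η'(k+1) = (η(k)+η(k+1))/2` (index `k+1` read as `N+1` when `k = N`) whose
increments are the wrapped increments `δ'` of `θ'`. -/
theorem lift_of_midpoint_update_exists_unique
    (N : ℕ) [NeZero N] (hN : 2 ≤ N)
    (θ : ZMod N → ℝ) (hθ : ∀ i, θ i ∈ Set.Ico (-π) π)
    (η : ℕ → ℝ)
    (hinc : ∀ i : ℕ, 1 ≤ i → i ≤ N →
      η (i + 1) - η i = wrapPi (θ ((i : ZMod N) + 1) - θ (i : ZMod N)))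
    (hanchor : wrapPi (η 1) = θ 1)
    (k : ℕ) (hk1 : 1 ≤ k) (hkN : k ≤ N)
    (hδk : wrapPi (θ ((k : ZMod N) + 1) - θ (k : ZMod N)) ≠ -π)
    (θ' : ZMod N → ℝ)
    (hθ' : θ' = fun i =>
      if i = (k : ZMod N) then
        wrapPi (θ (k : ZMod N) + wrapPi (θ ((k : ZMod N) + 1) - θ (k : ZMod N)) / 2)
      else if i = (k : ZMod N) + 1 then
        wrapPi (θ ((k : ZMod N) + 1) - wrapPi (θ ((k : ZMod N) + 1) - θ (k : ZMod N)) / 2)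
      else θ i) :
    ∃ η' : ℕ → ℝ,
      (η' k = (η k + η (k + 1)) / 2 ∧
       η' (k + 1) = (η k + η (k + 1)) / 2 ∧
       (∀ i : ℕ, 1 ≤ i → i ≤ N →
         η' (i + 1) - η' i = wrapPi (θ' ((i : ZMod N) + 1) - θ' (i : ZMod N))) ∧
       wrapPi (η' 1) = θ' 1) ∧
      (∀ η'' : ℕ → ℝ,
        (η'' k = (η k + η (k + 1)) / 2 ∧
         η'' (k + 1) = (η k + η (k + 1)) / 2 ∧
         (∀ i : ℕ, 1 ≤ i → i ≤ N →
           η'' (i + 1) - η'' i = wrapPi (θ' ((i : ZMod N) + 1) - θ' (i : ZMod N))) ∧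
         wrapPi (η'' 1) = θ' 1) →
        ∀ i : ℕ, 1 ≤ i → i ≤ N + 1 → η'' i = η' i) :=
  lift_of_midpoint_update_exists_unique_general N θ η hinc hanchor k hk1 hkN θ' hθ'
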